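/- Fix a real number m ≠ 0 and real λ, μ. For real r > 0 with r ≠ 1, set η(r) = m/(1 − r), let g(r) be the 2×2 matrix [[1, η(r)], [0, 1]], and let M(r) = (g(r) ⊗ g(r))⁻¹ * R_r^{λ,μ} * (g(r) ⊗ g(r)). Then M(r) tends (entrywise) to R_m^{λ,μ} as r tends to 1 within {r ∈ ℝ | r > 0, r ≠ 1}. -/

import Mathlib

noncomputable section

open Matrix Filter Topology Real

/-- The coloured `R`-matrix `R_r^{λ,μ}` of the coloured quantum group `GL_r^{λ,μ}(2)`,
indexed by `Fin 2 × Fin 2` (indices `0,1` correspond to the paper's `1,2`);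
the powers of `r` are real powers. -/
def RcolQ (r l μ : ℝ) : Matrix (Fin 2 × Fin 2) (Fin 2 × Fin 2) ℝ :=
  fun p q =>
    if p = (0, 0) ∧ q = (0, 0) then r ^ (1 - (l - μ))
    else if p = (0, 1) ∧ q = (0, 1) then r ^ (l + μ)
    else if p = (0, 1) ∧ q = (1, 0) then r - r⁻¹
    else if p = (1, 0) ∧ q = (1, 0) then r ^ (-(l + μ))
    else if p = (1, 1) ∧ q = (1, 1) then r ^ (1 + (l - μ))
    else 0

/-- The coloured Jordanian `R`-matrix `R_m^{λ,μ}` (real version), indexed by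
`Fin 2 × Fin 2` (indices `0,1` correspond to the paper's `1,2`). -/
def RcolJ (m l μ : ℝ) : Matrix (Fin 2 × Fin 2) (Fin 2 × Fin 2) ℝ :=
  fun p q =>
    if p = q then 1
    else if p = (0, 0) ∧ q = (0, 1) then -(m * (1 - 2 * l))
    else if p = (0, 0) ∧ q = (1, 0) then m * (1 - 2 * μ)
    else if p = (0, 0) ∧ q = (1, 1) then m ^ 2 * (1 - 4 * l * μ)
    else if p = (0, 1) ∧ q = (1, 1) then -(m * (1 + 2 * μ))
    else if p = (1, 0) ∧ q = (1, 1) then m * (1 + 2 * l)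
    else 0

/-- The `2×2` transformation matrix `g = [[1, η], [0, 1]]`. -/
def gmat (η : ℝ) : Matrix (Fin 2) (Fin 2) ℝ :=
  !![1, η; 0, 1]

/-- Kronecker square of a `2×2` matrix, indexed by `Fin 2 × Fin 2`. -/
def kron2 (g : Matrix (Fin 2) (Fin 2) ℝ) :
    Matrix (Fin 2 × Fin 2) (Fin 2 × Fin 2) ℝ :=
  fun p q => g p.1 q.1 * g p.2 q.2

/-! ### Auxiliary material -/

lemma kron2_gmat_inv (η : ℝ) : (kron2 (gmat η))⁻¹ = kron2 (gmat (-η)) := by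
  apply inv_eq_left_inv
  ext ⟨i, j⟩ ⟨k, l⟩
  fin_cases i <;> fin_cases j <;> fin_cases k <;> fin_cases l <;>
    simp [Matrix.mul_apply, Fintype.sum_prod_type, Fin.sum_univ_two, kron2, gmat,
      Matrix.one_apply, Prod.ext_iff]

/-- Explicit form of the conjugated matrix. -/
def Mex (η r l μ : ℝ) : Matrix (Fin 2 × Fin 2) (Fin 2 × Fin 2) ℝ :=
  fun p q =>
    if p = (0, 0) ∧ q = (0, 0) then r ^ (1 - (l - μ))
    else if p = (0, 0) ∧ q = (0, 1) then η * (r ^ (1 - (l - μ)) - r ^ (l + μ))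
    else if p = (0, 0) ∧ q = (1, 0) then
      η * (r ^ (1 - (l - μ)) - (r - r⁻¹) - r ^ (-(l + μ)))
    else if p = (0, 0) ∧ q = (1, 1) then
      η ^ 2 * (r ^ (1 - (l - μ)) - r ^ (l + μ) - (r - r⁻¹) - r ^ (-(l + μ)) + r ^ (1 + (l - μ)))
    else if p = (0, 1) ∧ q = (0, 1) then r ^ (l + μ)
    else if p = (0, 1) ∧ q = (1, 0) then r - r⁻¹
    else if p = (0, 1) ∧ q = (1, 1) then η * (r ^ (l + μ) + (r - r⁻¹) - r ^ (1 + (l - μ)))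
    else if p = (1, 0) ∧ q = (1, 0) then r ^ (-(l + μ))
    else if p = (1, 0) ∧ q = (1, 1) then η * (r ^ (-(l + μ)) - r ^ (1 + (l - μ)))
    else if p = (1, 1) ∧ q = (1, 1) then r ^ (1 + (l - μ))
    else 0

lemma conj_eq (η r l μ : ℝ) :
    (kron2 (gmat η))⁻¹ * RcolQ r l μ * kron2 (gmat η) = Mex η r l μ := by
  rw [kron2_gmat_inv]
  ext ⟨i, j⟩ ⟨k, l'⟩
  fin_cases i <;> fin_cases j <;> fin_cases k <;> fin_cases l' <;>
    (simp [Matrix.mul_apply, Fintype.sum_prod_type, Fin.sum_univ_two, kron2, gmat,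
      RcolQ, Mex, Prod.ext_iff]; try ring)

/-- The contraction filter. -/
abbrev Lfil : Filter ℝ := 𝓝[{r : ℝ | 0 < r ∧ r ≠ 1}] 1

lemma Lfil_le_punctured : Lfil ≤ 𝓝[≠] (1 : ℝ) :=
  nhdsWithin_mono 1 fun r hr => hr.2

lemma slope_rpow (x : ℝ) :
    Tendsto (fun r : ℝ => (r ^ x - 1) / (r - 1)) (𝓝[≠] (1 : ℝ)) (𝓝 x) := by
  have h : HasDerivAt (fun r : ℝ => r ^ x) (x * (1 : ℝ) ^ (x - 1)) 1 :=
    Real.hasDerivAt_rpow_const (Or.inl one_ne_zero)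
  have h2 := hasDerivAt_iff_tendsto_slope.mp h
  rw [Real.one_rpow, mul_one] at h2
  refine h2.congr fun r => ?_
  simp [slope_def_field, Real.one_rpow]

lemma slope_rpow' (x : ℝ) :
    Tendsto (fun r : ℝ => (r ^ x - 1) / (r - 1)) Lfil (𝓝 x) :=
  (slope_rpow x).mono_left Lfil_le_punctured

lemma tendsto_rpow_one (x : ℝ) : Tendsto (fun r : ℝ => r ^ x) (𝓝 (1 : ℝ)) (𝓝 1) := by
  have := (Real.continuousAt_rpow_const 1 x (Or.inl one_ne_zero)).tendsto
  rwa [Real.one_rpow] at this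

lemma tendsto_rpow_one' (x : ℝ) : Tendsto (fun r : ℝ => r ^ x) Lfil (𝓝 1) :=
  (tendsto_rpow_one x).mono_left nhdsWithin_le_nhds

lemma tendsto_inv_one' : Tendsto (fun r : ℝ => r⁻¹) Lfil (𝓝 1) := by
  have := (continuousAt_inv₀ (one_ne_zero : (1 : ℝ) ≠ 0)).tendsto
  rw [inv_one] at this
  exact this.mono_left nhdsWithin_le_nhds

lemma tendsto_id_one' : Tendsto (fun r : ℝ => r) Lfil (𝓝 1) :=
  (continuous_id.tendsto 1).mono_left nhdsWithin_le_nhds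

/-- Second-order Taylor limit for `rpow`, via L'Hôpital. -/
lemma second_rpow (x : ℝ) :
    Tendsto (fun r : ℝ => (r ^ x - 1 - x * (r - 1)) / (r - 1) ^ 2) (𝓝[≠] (1 : ℝ))
      (𝓝 (x * (x - 1) / 2)) := by
  have hpos : ∀ᶠ r : ℝ in 𝓝[≠] (1 : ℝ), 0 < r :=
    eventually_nhdsWithin_of_eventually_nhds (eventually_gt_nhds one_pos)
  have hne : ∀ᶠ r : ℝ in 𝓝[≠] (1 : ℝ), r ≠ 1 := self_mem_nhdsWithin
  refine HasDerivAt.lhopital_zero_nhdsNE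
      (f' := fun r => x * r ^ (x - 1) - x) (g' := fun r => 2 * (r - 1)) ?_ ?_ ?_ ?_ ?_ ?_
  · filter_upwards [hpos] with r hr
    have h1 : HasDerivAt (fun r : ℝ => r ^ x) (x * r ^ (x - 1)) r :=
      Real.hasDerivAt_rpow_const (Or.inl hr.ne')
    have h2 : HasDerivAt (fun r : ℝ => x * (r - 1)) (x * 1) r :=
      ((hasDerivAt_id r).sub_const 1).const_mul x
    have h3 := (h1.sub_const 1).sub h2
    rw [mul_one] at h3
    exact h3
  · filter_upwards with r
    have h : HasDerivAt (fun r : ℝ => (r - 1) ^ 2) (2 * (r - 1) ^ 1 * 1) r :=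
      ((hasDerivAt_id r).sub_const 1).pow 2
    simpa using h
  · filter_upwards [hne] with r hr
    have : r - 1 ≠ 0 := sub_ne_zero.mpr hr
    positivity
  · have h1 : Tendsto (fun r : ℝ => r ^ x - 1 - x * (r - 1)) (𝓝 (1 : ℝ)) (𝓝 (1 - 1 - x * 0)) := by
      exact ((tendsto_rpow_one x).sub tendsto_const_nhds).sub
        (tendsto_const_nhds.mul ((continuous_id.sub continuous_const).tendsto' 1 0 (by norm_num)))
    simpa using h1.mono_left nhdsWithin_le_nhds
  · have h1 : Tendsto (fun r : ℝ => (r - 1) ^ 2) (𝓝 (1 : ℝ)) (𝓝 0) :=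
      ((continuous_id.sub continuous_const).pow 2).tendsto' 1 0 (by norm_num)
    exact h1.mono_left nhdsWithin_le_nhds
  · have h1 : Tendsto (fun r : ℝ => x / 2 * ((r ^ (x - 1) - 1) / (r - 1))) (𝓝[≠] (1 : ℝ))
        (𝓝 (x / 2 * (x - 1))) := (slope_rpow (x - 1)).const_mul (x / 2)
    have hval : x / 2 * (x - 1) = x * (x - 1) / 2 := by ring
    rw [hval] at h1
    refine h1.congr' ?_
    filter_upwards [hne] with r hr
    have h : r - 1 ≠ 0 := sub_ne_zero.mpr hr
    field_simp

lemma second_rpow' (x : ℝ) :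
    Tendsto (fun r : ℝ => (r ^ x - 1 - x * (r - 1)) / (r - 1) ^ 2) Lfil
      (𝓝 (x * (x - 1) / 2)) :=
  (second_rpow x).mono_left Lfil_le_punctured

lemma mem_Lfil : ∀ᶠ r : ℝ in Lfil, 0 < r ∧ r ≠ 1 := self_mem_nhdsWithin

/-- in the contraction limit `r → 1` with `η(r) = m/(1−r)`, the
transformed coloured `R`-matrix `(g⊗g)⁻¹ R_r^{λ,μ} (g⊗g)` tends entrywise to the
coloured Jordanian `R`-matrix `R_m^{λ,μ}`. -/
theorem RcolQ_contraction_to_RcolJ (m : ℝ) (hm : m ≠ 0) (l μ : ℝ) (p q : Fin 2 × Fin 2) :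
    Tendsto
      (fun r : ℝ =>
        ((kron2 (gmat (m / (1 - r))))⁻¹ * RcolQ r l μ * kron2 (gmat (m / (1 - r)))) p q)
      (𝓝[{r : ℝ | 0 < r ∧ r ≠ 1}] 1)
      (𝓝 (RcolJ m l μ p q)) := by
  simp only [conj_eq]
  have hE : Tendsto (fun r : ℝ => r⁻¹ * (r + 1)) Lfil (𝓝 2) := by
    have h := tendsto_inv_one'.mul (tendsto_id_one'.add (tendsto_const_nhds (x := (1:ℝ))))
    norm_num at h
    exact h
  fin_cases p <;> fin_cases q <;>
      simp only [Mex, RcolJ, Prod.mk.injEq, Fin.ext_iff] <;> norm_num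
  -- (0,0) (0,0)
  · exact tendsto_rpow_one' _
  -- (0,0) (0,1)
  · have h := ((slope_rpow' (1 - (l - μ))).sub (slope_rpow' (l + μ))).const_mul (-m)
    have hv : -(m * (1 - 2 * l)) = -m * ((1 - (l - μ)) - (l + μ)) := by ring
    rw [hv]
    refine Tendsto.congr' ?_ h
    filter_upwards [mem_Lfil] with r hr
    have h1 : r - 1 ≠ 0 := sub_ne_zero.mpr hr.2
    have h2 : (1 : ℝ) - r ≠ 0 := sub_ne_zero.mpr (Ne.symm hr.2)
    field_simp
    ring
  -- (0,0) (1,0)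
  · have h := (((slope_rpow' (1 - (l - μ))).sub hE).sub (slope_rpow' (-μ + -l))).const_mul (-m)
    have hv : m * (1 - 2 * μ) = -m * ((1 - (l - μ)) - 2 - (-μ + -l)) := by ring
    rw [hv]
    refine Tendsto.congr' ?_ h
    filter_upwards [mem_Lfil] with r hr
    have h0 : r ≠ 0 := hr.1.ne'
    have h1 : r - 1 ≠ 0 := sub_ne_zero.mpr hr.2
    have h2 : (1 : ℝ) - r ≠ 0 := sub_ne_zero.mpr (Ne.symm hr.2)
    field_simp
    ring
  -- (0,0) (1,1)
  · have h := (((((second_rpow' (1 - (l - μ))).sub (second_rpow' (l + μ))).sub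
        (second_rpow' (-μ + -l))).add (second_rpow' (1 + (l - μ)))).add
        tendsto_inv_one').const_mul (m ^ 2)
    have hv : m ^ 2 * (1 - 4 * l * μ) =
        m ^ 2 * ((1 - (l - μ)) * ((1 - (l - μ)) - 1) / 2 - (l + μ) * ((l + μ) - 1) / 2 -
          (-μ + -l) * ((-μ + -l) - 1) / 2 + (1 + (l - μ)) * ((1 + (l - μ)) - 1) / 2 + 1) := by
      ring
    rw [hv]
    refine Tendsto.congr' ?_ h
    filter_upwards [mem_Lfil] with r hr
    have h0 : r ≠ 0 := hr.1.ne'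
    have h1 : r - 1 ≠ 0 := sub_ne_zero.mpr hr.2
    have h2 : (1 : ℝ) - r ≠ 0 := sub_ne_zero.mpr (Ne.symm hr.2)
    field_simp
    ring
  -- (0,1) (0,0)
  · exact tendsto_const_nhds
  -- (0,1) (0,1)
  · exact tendsto_rpow_one' _
  -- (0,1) (1,0)
  · simpa using tendsto_id_one'.sub tendsto_inv_one'
  -- (0,1) (1,1)
  · have h := (((slope_rpow' (l + μ)).add hE).sub (slope_rpow' (1 + (l - μ)))).const_mul (-m)
    have hv : -(m * (1 + 2 * μ)) = -m * ((l + μ) + 2 - (1 + (l - μ))) := by ring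
    rw [hv]
    refine Tendsto.congr' ?_ h
    filter_upwards [mem_Lfil] with r hr
    have h0 : r ≠ 0 := hr.1.ne'
    have h1 : r - 1 ≠ 0 := sub_ne_zero.mpr hr.2
    have h2 : (1 : ℝ) - r ≠ 0 := sub_ne_zero.mpr (Ne.symm hr.2)
    field_simp
    ring
  -- (1,0) (0,0)
  · exact tendsto_const_nhds
  -- (1,0) (0,1)
  · exact tendsto_const_nhds
  -- (1,0) (1,0)
  · exact tendsto_rpow_one' _
  -- (1,0) (1,1)
  · have h := ((slope_rpow' (-μ + -l)).sub (slope_rpow' (1 + (l - μ)))).const_mul (-m)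
    have hv : m * (1 + 2 * l) = -m * ((-μ + -l) - (1 + (l - μ))) := by ring
    rw [hv]
    refine Tendsto.congr' ?_ h
    filter_upwards [mem_Lfil] with r hr
    have h1 : r - 1 ≠ 0 := sub_ne_zero.mpr hr.2
    have h2 : (1 : ℝ) - r ≠ 0 := sub_ne_zero.mpr (Ne.symm hr.2)
    field_simp
    ring
  -- (1,1) (0,0)
  · exact tendsto_const_nhds
  -- (1,1) (0,1)
  · exact tendsto_const_nhds
  -- (1,1) (1,0)
  · exact tendsto_const_nhds
  -- (1,1) (1,1)
  · exact tendsto_rpow_one' _
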